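/- Let v̄ ∈ ℝ^K be a unit vector with ⟨v̄, ẽ_1⟩ = β for some β ∈ [0,1]. Then for every p ∈ ℝ^K with nonnegative entries, first entry p_1 = 0, and Σ_{k=1}^K p_k = 1: | (1/(K−1))·Σ_{k=2}^K [v̄]_k − ⟨p, v̄⟩ | ≤ √(1 − β²). -/

import Mathlib

/-!
Let `u` be the uniform probability vector on the classes `k ≠ 1`; the quantity to bound is
`⟪u - p, v̄⟫`. Since `⟪q, ẽ_1⟫` depends only on `q_1` and `∑ q`, and `u`, `p` agree on both,
`u - p ⟂ ẽ_1`, so only the component of `v̄` orthogonal to the unit vector `ẽ_1`, of norm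
`√(1 - β²)`, contributes. Finally `‖u - p‖² = ‖p‖² - 1/(K-1) ≤ (∑ p_k)² = 1`.
-/

open scoped RealInnerProductSpace
open Finset

noncomputable section

/-- The `k`-th column of the matrix `Ẽ = √(K/(K−1))·(I_K − (1/K)·𝟙𝟙ᵀ)` (the pseudo-label of
class `k`). -/
def etilde (K : ℕ) (k : Fin K) : EuclideanSpace ℝ (Fin K) :=
  WithLp.toLp 2 (fun l => Real.sqrt ((K : ℝ) / ((K : ℝ) - 1)) * ((if l = k then 1 else 0) - 1 / (K : ℝ)))

theorem abs_inner_le_norm_mul_sqrt_of_inner_eq_zero {E : Type*} [NormedAddCommGroup E]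
    [InnerProductSpace ℝ E] {x e : E} (hxe : ⟪x, e⟫ = 0) (he : ‖e‖ = 1) (v : E) :
    |⟪x, v⟫| ≤ ‖x‖ * √(‖v‖ ^ 2 - ⟪v, e⟫ ^ 2) := by
  have hproj : ⟪x, v⟫ = ⟪x, v - ⟪v, e⟫ • e⟫ := by
    rw [inner_sub_right, real_inner_smul_right, hxe, mul_zero, sub_zero]
  have hnorm : ‖v - ⟪v, e⟫ • e‖ = √(‖v‖ ^ 2 - ⟪v, e⟫ ^ 2) := by
    rw [← Real.sqrt_sq (norm_nonneg _), norm_sub_sq_real, real_inner_smul_right, norm_smul,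
      he, Real.norm_eq_abs, mul_one, sq_abs]
    ring_nf
  exact hproj ▸ hnorm ▸ abs_real_inner_le_norm x _

theorem norm_sq_le_one_of_nonneg_of_sum_eq_one {ι : Type*} [Fintype ι] {p : EuclideanSpace ℝ ι}
    (hp0 : ∀ i, 0 ≤ p i) (hps : ∑ i, p i = 1) : ‖p‖ ^ 2 ≤ 1 := by
  rw [EuclideanSpace.real_norm_sq_eq, ← one_pow 2, ← hps]
  exact sum_sq_le_sq_sum_of_nonneg fun i _ => hp0 i

theorem inner_etilde (K : ℕ) (k : Fin K) (q : EuclideanSpace ℝ (Fin K)) :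
    ⟪q, etilde K k⟫ = √((K : ℝ) / (K - 1)) * (q k - (∑ i, q i) / K) := by
  simp only [PiLp.inner_apply, etilde, RCLike.inner_apply, conj_trivial, mul_assoc, ← mul_sum,
    sub_mul, sum_sub_distrib, ite_mul, one_mul, zero_mul, sum_ite_eq', mem_univ, if_true,
    div_mul_eq_mul_div, ← sum_div]

theorem sum_etilde (K : ℕ) (k : Fin K) : ∑ i, etilde K k i = 0 := by
  rcases eq_or_ne K 0 with rfl | hK
  · simp
  · simp [etilde, ← mul_sum, sum_sub_distrib, hK]

theorem norm_etilde {K : ℕ} (hK : 1 < K) (k : Fin K) : ‖etilde K k‖ = 1 := by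
  have hK' : (1 : ℝ) < K := by exact_mod_cast hK
  rw [← pow_eq_one_iff_of_nonneg (norm_nonneg _) two_ne_zero, ← real_inner_self_eq_norm_sq,
    inner_etilde, sum_etilde]
  simp only [etilde, PiLp.toLp_apply, if_true, zero_div, sub_zero, ← mul_assoc, ← sq,
    Real.sq_sqrt (div_nonneg (Nat.cast_nonneg K) (sub_pos.2 hK').le)]
  field_simp
  exact div_self (sub_pos.2 hK').ne'

def uniformCompl (K : ℕ) (k : Fin K) : EuclideanSpace ℝ (Fin K) :=
  WithLp.toLp 2 fun l => if l = k then 0 else 1 / ((K : ℝ) - 1)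

theorem inner_uniformCompl (K : ℕ) (k : Fin K) (q : EuclideanSpace ℝ (Fin K)) :
    ⟪uniformCompl K k, q⟫ = 1 / ((K : ℝ) - 1) * ∑ i ∈ univ.filter fun i => i ≠ k, q i := by
  simp [PiLp.inner_apply, uniformCompl, mul_sum, sum_filter, mul_comm]

theorem uniformCompl_self (K : ℕ) (k : Fin K) : uniformCompl K k k = 0 := by
  simp [uniformCompl]

theorem sum_uniformCompl {K : ℕ} (hK : 1 < K) (k : Fin K) : ∑ i, uniformCompl K k i = 1 := by
  have hK' : (1 : ℝ) < K := by exact_mod_cast hK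
  simp only [uniformCompl, sum_ite, sum_const_zero, filter_ne', sum_const, mem_univ,
    card_erase_of_mem, card_univ, Fintype.card_fin, nsmul_eq_mul, Nat.cast_sub hK.le, Nat.cast_one,
    zero_add, mul_one_div]
  exact div_self (sub_pos.2 hK').ne'

theorem norm_uniformCompl_sub_le {K : ℕ} (hK : 1 < K) {k : Fin K} {p : EuclideanSpace ℝ (Fin K)}
    (hp0 : ∀ i, 0 ≤ p i) (hps : ∑ i, p i = 1) (hpk : p k = 0) :
    ‖uniformCompl K k - p‖ ≤ 1 := by
  have hK' : (1 : ℝ) < K := by exact_mod_cast hK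
  have hsum_compl : ∀ q : EuclideanSpace ℝ (Fin K),
      ∑ i ∈ univ.filter (fun i => i ≠ k), q i = ∑ i, q i - q k := fun q => by
    rw [filter_ne', sum_erase_eq_sub (mem_univ k)]
  have hsq : ‖uniformCompl K k - p‖ ^ 2 = ‖p‖ ^ 2 - 1 / ((K : ℝ) - 1) := by
    rw [norm_sub_sq_real, ← real_inner_self_eq_norm_sq (uniformCompl K k), inner_uniformCompl,
      inner_uniformCompl, hsum_compl, hsum_compl, sum_uniformCompl hK, uniformCompl_self, hps, hpk]
    ring
  rw [← pow_le_one_iff_of_nonneg (norm_nonneg _) two_ne_zero, hsq]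
  have := norm_sq_le_one_of_nonneg_of_sum_eq_one hp0 hps
  have : 0 ≤ 1 / ((K : ℝ) - 1) := by have := sub_pos.2 hK'; positivity
  linarith

/-- Let `v̄ ∈ ℝ^K` be a unit vector with `⟨v̄, ẽ_1⟩ = β ∈ [0,1]`. Then for
every probability vector `p` with `p_1 = 0`,
`|(1/(K−1))·Σ_{k≥2} v̄_k − ⟨p, v̄⟩| ≤ √(1 − β²)`. -/
theorem pseudo_label_average_bound
    (K : ℕ) (hK : 2 ≤ K)
    (vb : EuclideanSpace ℝ (Fin K)) (hvb : ‖vb‖ = 1)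
    (β : ℝ)
    (hβ : ⟪vb, etilde K ⟨0, by omega⟩⟫ = β)
    (p : EuclideanSpace ℝ (Fin K)) (hp0 : ∀ k, 0 ≤ p k)
    (hp1 : p ⟨0, by omega⟩ = 0) (hps : ∑ k, p k = 1) :
    |(1 / ((K : ℝ) - 1)) *
        (∑ k ∈ Finset.univ.filter fun k => k ≠ (⟨0, by omega⟩ : Fin K), vb k) - ⟪p, vb⟫| ≤
      Real.sqrt (1 - β ^ 2) := by
  set z : Fin K := ⟨0, by omega⟩
  have horth : ⟪uniformCompl K z - p, etilde K z⟫ = 0 := by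
    rw [inner_sub_left, inner_etilde, inner_etilde, sum_uniformCompl hK, uniformCompl_self, hps,
      hp1, sub_self]
  rw [← inner_uniformCompl, ← inner_sub_left]
  calc |⟪uniformCompl K z - p, vb⟫|
      ≤ ‖uniformCompl K z - p‖ * √(‖vb‖ ^ 2 - ⟪vb, etilde K z⟫ ^ 2) :=
        abs_inner_le_norm_mul_sqrt_of_inner_eq_zero horth (norm_etilde hK z) vb
    _ ≤ 1 * √(1 - β ^ 2) := by
        rw [hvb, hβ, one_pow]
        gcongr
        exact norm_uniformCompl_sub_le hK hp0 hps hp1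
    _ = √(1 - β ^ 2) := one_mul _
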